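/- arXiv:2201.05637 — 7 statements merged into one kernel-verified Lean document; each statement's English description precedes it below -/
import Mathlib

section
/- If G = H × K is a direct product of finite groups, and ⟨h⟩ is maximal cyclic in H and ⟨k⟩ is maximal cyclic in K, then ⟨(h,k)⟩ is a maximal cyclic subgroup of G. -/
/-- A subgroup is maximal cyclic if it is cyclic and not properly contained
in any cyclic subgroup. -/
def IsMaximalCyclic {G : Type*} [Group G] (C : Subgroup G) : Prop :=
  IsCyclic C ∧ ∀ D : Subgroup G, IsCyclic D → C ≤ D → C = D

/-- η(G): the number of conjugacy classes of maximal cyclic subgroups of `G`. -/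
noncomputable def eta (G : Type*) [Group G] : ℕ :=
  Nat.card (Quot (fun C D : {C : Subgroup G // IsMaximalCyclic C} =>
    ∃ g : G, D.1 = C.1.map (MulAut.conj g).toMonoidHom))

/-- The set of elements generating a non-maximal cyclic subgroup. -/
def Gminus (G : Type*) [Group G] : Set G :=
  {g : G | ¬ IsMaximalCyclic (Subgroup.zpowers g)}

/-- `C` is a maximal cyclic subgroup of `N` (all inside an ambient group). -/
def IsMaximalCyclicIn {G : Type*} [Group G] (N C : Subgroup G) : Prop :=
  C ≤ N ∧ IsCyclic C ∧ ∀ D : Subgroup G, D ≤ N → IsCyclic D → C ≤ D → C = D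

/-! If `(h, k) ∈ ⟨(a, b)⟩`, then `h ∈ ⟨a⟩` and `k ∈ ⟨b⟩`, so maximality gives `⟨h⟩ = ⟨a⟩`
and `⟨k⟩ = ⟨b⟩`. Hence `h, a` and `k, b` have the same orders, so `(h, k)` and `(a, b)` have the
same order `lcm`, and the inclusion `⟨(h, k)⟩ ≤ ⟨(a, b)⟩` of finite groups is an equality. -/

open Subgroup

theorem isMaximalCyclic_zpowers_iff {G : Type*} [Group G] (g : G) :
    IsMaximalCyclic (zpowers g) ↔ ∀ a : G, g ∈ zpowers a → zpowers g = zpowers a := by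
  refine ⟨fun hg a ha ↦ hg.2 _ inferInstance (zpowers_le.2 ha), fun hg ↦ ⟨inferInstance, ?_⟩⟩
  intro D hD hle
  obtain ⟨a, rfl⟩ := (D.isCyclic_iff_exists_zpowers_eq_top).1 hD
  exact hg a (zpowers_le.1 hle)

theorem orderOf_eq_of_zpowers_eq {G : Type*} [Group G] {g a : G} (h : zpowers g = zpowers a) :
    orderOf g = orderOf a := by
  rw [← Nat.card_zpowers, h, Nat.card_zpowers]

theorem Prod.zpowers_mk_eq_of_zpowers_eq {H K : Type*} [Group H] [Group K] [Finite H] [Finite K]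
    {h a : H} {k b : K} (hmem : (h, k) ∈ zpowers (a, b))
    (hha : zpowers h = zpowers a) (hkb : zpowers k = zpowers b) :
    zpowers (h, k) = zpowers (a, b) := by
  refine eq_of_le_of_card_ge (zpowers_le.2 hmem) ?_
  rw [Nat.card_zpowers, Nat.card_zpowers, Prod.orderOf_mk, Prod.orderOf_mk,
    orderOf_eq_of_zpowers_eq hha, orderOf_eq_of_zpowers_eq hkb]

theorem stmt_1 {H K : Type*} [Group H] [Group K] [Finite H] [Finite K]
    (h : H) (k : K)
    (hh : IsMaximalCyclic (Subgroup.zpowers h))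
    (hk : IsMaximalCyclic (Subgroup.zpowers k)) :
    IsMaximalCyclic (Subgroup.zpowers ((h, k) : H × K)) := by
  rw [isMaximalCyclic_zpowers_iff] at hh hk ⊢
  rintro ⟨a, b⟩ hmem
  obtain ⟨n, hn⟩ := hmem
  have hha : zpowers h = zpowers a := hh a ⟨n, congrArg Prod.fst hn⟩
  have hkb : zpowers k = zpowers b := hk b ⟨n, congrArg Prod.snd hn⟩
  exact Prod.zpowers_mk_eq_of_zpowers_eq ⟨n, hn⟩ hha hkb
end

section
/- If G = H × K is a direct product of finite groups, then η(G) ≥ η(H)·η(K), where η denotes the number of conjugacy classes of maximal cyclic subgroups. -/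
/-!
Given maximal cyclic subgroups `⟨h⟩ ≤ H` and `⟨k⟩ ≤ K`, take a maximal cyclic subgroup `Z` of
`H × K` containing `(h, k)`. Its projections are cyclic and contain `⟨h⟩` and `⟨k⟩`, so by
maximality they equal `⟨h⟩` and `⟨k⟩`. Conjugation in `H × K` is componentwise, so conjugate
subgroups have conjugate projections: the class of `Z` determines the pair of classes of
`⟨h⟩` and `⟨k⟩`, which gives an injection of pairs of classes into classes of `H × K`.
-/

open Subgroup

section

variable {G G' : Type*} [Group G] [Group G']

lemma Subgroup.map_conj_map_conj (C : Subgroup G) (g h : G) :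
    (C.map (MulAut.conj g).toMonoidHom).map (MulAut.conj h).toMonoidHom =
      C.map (MulAut.conj (h * g)).toMonoidHom := by
  rw [map_map]
  congr 1
  ext x
  simp [mul_assoc]

lemma Subgroup.map_conj_one (C : Subgroup G) : C.map (MulAut.conj (1 : G)).toMonoidHom = C := by
  rw [map_one]
  exact C.map_id

lemma Subgroup.map_map_conj (f : G →* G') (C : Subgroup G) (g : G) :
    (C.map (MulAut.conj g).toMonoidHom).map f = (C.map f).map (MulAut.conj (f g)).toMonoidHom := by
  rw [map_map, map_map]
  congr 1
  ext x
  simp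

lemma Subgroup.isCyclic_map (f : G →* G') {C : Subgroup G} (hC : IsCyclic C) :
    IsCyclic (C.map f) := by
  obtain ⟨g, rfl⟩ := C.isCyclic_iff_exists_zpowers_eq_top.mp hC
  rw [MonoidHom.map_zpowers]
  infer_instance

lemma isMaximalCyclic_iff_maximal {C : Subgroup G} :
    IsMaximalCyclic C ↔ Maximal (fun D : Subgroup G ↦ IsCyclic D) C :=
  and_congr_right fun _ ↦ forall₂_congr fun _ _ ↦
    ⟨fun h hle ↦ (h hle).ge, fun h hle ↦ le_antisymm hle (h hle)⟩

lemma IsMaximalCyclic.eq_map_of_le {f : G' →* G} {C : Subgroup G} (hC : IsMaximalCyclic C)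
    {Z : Subgroup G'} (hZ : IsCyclic Z) (hle : C ≤ Z.map f) : C = Z.map f :=
  hC.2 _ (isCyclic_map f hZ) hle

lemma exists_isMaximalCyclic_zpowers_le [Finite G] (g : G) :
    ∃ Z : Subgroup G, IsMaximalCyclic Z ∧ zpowers g ≤ Z := by
  obtain ⟨Z, hle, hZ⟩ := Finite.exists_le_maximal (α := Subgroup G) (p := fun D ↦ IsCyclic D)
    (isCyclic_zpowers g)
  exact ⟨Z, isMaximalCyclic_iff_maximal.mpr hZ, hle⟩

variable (G) in
def maximalCyclicConj : Setoid {C : Subgroup G // IsMaximalCyclic C} where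
  r C D := ∃ g : G, D.1 = C.1.map (MulAut.conj g).toMonoidHom
  iseqv :=
    { refl C := ⟨1, C.1.map_conj_one.symm⟩
      symm := by
        rintro C D ⟨g, hg⟩
        refine ⟨g⁻¹, ?_⟩
        rw [hg, map_conj_map_conj, inv_mul_cancel, map_conj_one]
      trans := by
        rintro C D E ⟨g, hg⟩ ⟨h, hh⟩
        exact ⟨h * g, by rw [hh, hg, map_conj_map_conj]⟩ }

lemma eta_eq_card_quotient : eta G = Nat.card (Quotient (maximalCyclicConj G)) := rfl

end

section Prod

variable {H K : Type*} [Group H] [Group K]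

lemma exists_isMaximalCyclic_map_fst_map_snd [Finite H] [Finite K] {C : Subgroup H}
    {D : Subgroup K} (hC : IsMaximalCyclic C) (hD : IsMaximalCyclic D) :
    ∃ Z : {Z : Subgroup (H × K) // IsMaximalCyclic Z},
      Z.1.map (MonoidHom.fst H K) = C ∧ Z.1.map (MonoidHom.snd H K) = D := by
  obtain ⟨h, rfl⟩ := C.isCyclic_iff_exists_zpowers_eq_top.mp hC.1
  obtain ⟨k, rfl⟩ := D.isCyclic_iff_exists_zpowers_eq_top.mp hD.1
  obtain ⟨Z, hZ, hle⟩ := exists_isMaximalCyclic_zpowers_le (h, k)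
  have hmem : (h, k) ∈ Z := hle (mem_zpowers _)
  exact ⟨⟨Z, hZ⟩, (hC.eq_map_of_le hZ.1 (zpowers_le.mpr ⟨_, hmem, rfl⟩)).symm,
    (hD.eq_map_of_le hZ.1 (zpowers_le.mpr ⟨_, hmem, rfl⟩)).symm⟩

noncomputable def prodMaximalCyclicClass [Finite H] [Finite K]
    (p : Quotient (maximalCyclicConj H) × Quotient (maximalCyclicConj K)) :
    Quotient (maximalCyclicConj (H × K)) :=
  ⟦(exists_isMaximalCyclic_map_fst_map_snd p.1.out.2 p.2.out.2).choose⟧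

lemma prodMaximalCyclicClass_injective [Finite H] [Finite K] :
    Function.Injective (prodMaximalCyclicClass (H := H) (K := K)) := by
  rintro ⟨p₁, p₂⟩ ⟨q₁, q₂⟩ hpq
  obtain ⟨hp₁, hp₂⟩ := (exists_isMaximalCyclic_map_fst_map_snd p₁.out.2 p₂.out.2).choose_spec
  obtain ⟨hq₁, hq₂⟩ := (exists_isMaximalCyclic_map_fst_map_snd q₁.out.2 q₂.out.2).choose_spec
  obtain ⟨⟨a, b⟩, hab⟩ := Quotient.exact hpq
  have h₁ : (maximalCyclicConj H).r p₁.out q₁.out :=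
    ⟨a, by rw [← hq₁, ← hp₁, hab, map_map_conj]; rfl⟩
  have h₂ : (maximalCyclicConj K).r p₂.out q₂.out :=
    ⟨b, by rw [← hq₂, ← hp₂, hab, map_map_conj]; rfl⟩
  exact Prod.ext (Quotient.out_equiv_out.mp h₁) (Quotient.out_equiv_out.mp h₂)

end Prod

theorem stmt_2 {H K : Type*} [Group H] [Group K] [Finite H] [Finite K] :
    eta H * eta K ≤ eta (H × K) := by
  simp only [eta_eq_card_quotient, ← Nat.card_prod]
  exact Nat.card_le_card_of_injective _ prodMaximalCyclicClass_injective
end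

section
/- If H and K are nontrivial finite p-groups for the same prime p and G = H × K, then η(G) ≥ η(H)·η(K) + η(H) + η(K). -/
/-!
Let `H`, `K` be nontrivial `p`-groups. If `⟨h⟩` is maximal cyclic in `H`, then `⟨(h, k)⟩` is
maximal cyclic in `H × K` for every `k`: writing `(h, k) = x ^ n`, maximality forces
`⟨x.1⟩ = ⟨h⟩`, so `n` is prime to `|h|`, a positive power of `p`; hence `n` is prime to the
order of `x`, and `x` is a power of `x ^ n`. Symmetrically for `⟨(h, k)⟩` with `⟨k⟩` maximal
cyclic.

Projecting to the factors sends a conjugacy class of maximal cyclic subgroups of `H × K` to a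
pair of "classes or nothing" in `H` and `K`. Choosing generators `h`, `k` of representatives and
taking `1` for "nothing", the subgroups `⟨(h, k)⟩` realise every pair except (nothing, nothing),
so there are at least `(η(H) + 1)(η(K) + 1) - 1` classes in `H × K`.
-/

open Subgroup

theorem IsPGroup.prod {p : ℕ} {H K : Type*} [Group H] [Group K]
    (hH : IsPGroup p H) (hK : IsPGroup p K) : IsPGroup p (H × K) := by
  rintro ⟨h, k⟩
  obtain ⟨m, hm⟩ := hH h
  obtain ⟨n, hn⟩ := hK k
  refine ⟨m + n, Prod.ext ?_ ?_⟩
  · simp [pow_add, pow_mul, hm]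
  · simp [pow_add, pow_mul', hn]

theorem IsPGroup.mem_zpowers_pow {p n : ℕ} {G : Type*} [Group G] (hG : IsPGroup p G)
    (hn : p.Coprime n) (x : G) : x ∈ zpowers (x ^ n) := by
  obtain ⟨m, hm⟩ := exists_pow_eq_self_of_coprime (hG.orderOf_coprime hn x).symm
  exact mem_zpowers_iff.mpr ⟨m, by rw [zpow_natCast, hm]⟩

section MaximalCyclic

variable {G G' : Type*} [Group G] [Group G']

theorem not_isMaximalCyclic_bot [Nontrivial G] : ¬ IsMaximalCyclic (⊥ : Subgroup G) := by
  rintro ⟨-, hmax⟩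
  obtain ⟨g, hg⟩ := exists_ne (1 : G)
  exact hg (zpowers_eq_bot.mp (hmax (zpowers g) inferInstance bot_le).symm)

theorem IsMaximalCyclic.map {C : Subgroup G} (hC : IsMaximalCyclic C) (e : G ≃* G') :
    IsMaximalCyclic (C.map e.toMonoidHom) := by
  have := hC.1
  refine ⟨isCyclic_of_surjective _ (e.toMonoidHom.subgroupMap_surjective C), fun D hD hle => ?_⟩
  rw [map_le_iff_le_comap] at hle
  have hDcyc : IsCyclic (D.comap e.toMonoidHom) := by
    rw [comap_equiv_eq_map_symm']
    exact isCyclic_of_surjective _ (e.symm.toMonoidHom.subgroupMap_surjective D)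
  rw [hC.2 _ hDcyc hle, map_comap_eq_self_of_surjective e.surjective]

theorem isMaximalCyclic_map_iff (e : G ≃* G') (C : Subgroup G) :
    IsMaximalCyclic (C.map e.toMonoidHom) ↔ IsMaximalCyclic C := by
  refine ⟨fun h => ?_, fun h => h.map e⟩
  have h' := h.map e.symm
  rwa [map_map, show e.symm.toMonoidHom.comp e.toMonoidHom = MonoidHom.id G by ext; simp,
    map_id] at h'

theorem IsPGroup.coprime_of_pow_eq_of_isMaximalCyclic {p n : ℕ} [Fact p.Prime] [Nontrivial G]
    (hG : IsPGroup p G) {g x : G} (hg : IsMaximalCyclic (zpowers g)) (hx : x ^ n = g) :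
    p.Coprime n := by
  have hg1 : g ≠ 1 := fun h => not_isMaximalCyclic_bot (zpowers_eq_bot.mpr h ▸ hg)
  have hzx : zpowers g = zpowers x :=
    hg.2 _ inferInstance (zpowers_le.mpr (hx ▸ npow_mem_zpowers x n))
  have hord : orderOf g = orderOf x := by rw [← Nat.card_zpowers, ← Nat.card_zpowers, hzx]
  have hx_fin := hG.isOfFinOrder (Fact.out : p.Prime).ne_zero x
  have hgcd : (orderOf x).Coprime n := by
    have h := hx_fin.orderOf_pow x n
    rw [hx, hord, eq_comm, Nat.div_eq_self] at h
    exact h.resolve_left hx_fin.orderOf_pos.ne'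
  exact hgcd.coprime_dvd_left (hord ▸ hG.dvd_orderOf hg1)

variable {H K : Type*} [Group H] [Group K] {p : ℕ} [Fact p.Prime]

theorem isMaximalCyclic_zpowers_prodMk_left [Nontrivial H] (hH : IsPGroup p H)
    (hK : IsPGroup p K) {h : H} (hmax : IsMaximalCyclic (zpowers h)) (k : K) :
    IsMaximalCyclic (zpowers (h, k)) := by
  have hHK := hH.prod hK
  refine ⟨inferInstance, fun D hD hle => ?_⟩
  obtain ⟨x, rfl⟩ := (D.isCyclic_iff_exists_zpowers_eq_top).mp hD
  have hx_fin := hHK.isOfFinOrder (Fact.out : p.Prime).ne_zero x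
  obtain ⟨n, hn⟩ := hx_fin.mem_powers_iff_mem_zpowers.mpr (hle (mem_zpowers _))
  have hcop : p.Coprime n :=
    hH.coprime_of_pow_eq_of_isMaximalCyclic hmax (by simpa using congrArg Prod.fst hn)
  exact le_antisymm hle (zpowers_le.mpr (hn ▸ hHK.mem_zpowers_pow hcop x))

theorem isMaximalCyclic_zpowers_prodMk_right [Nontrivial K] (hH : IsPGroup p H)
    (hK : IsPGroup p K) {k : K} (hmax : IsMaximalCyclic (zpowers k)) (h : H) :
    IsMaximalCyclic (zpowers (h, k)) := by
  have := (isMaximalCyclic_zpowers_prodMk_left hK hH hmax h).map MulEquiv.prodComm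
  rwa [MonoidHom.map_zpowers] at this

end MaximalCyclic

section Projections

variable {H K : Type*} [Group H] [Group K]

theorem map_fst_map_conj (E : Subgroup (H × K)) (x : H × K) :
    (E.map (MulAut.conj x).toMonoidHom).map (MonoidHom.fst H K)
      = (E.map (MonoidHom.fst H K)).map (MulAut.conj x.1).toMonoidHom := by
  rw [map_map, map_map]
  rfl

theorem map_snd_map_conj (E : Subgroup (H × K)) (x : H × K) :
    (E.map (MulAut.conj x).toMonoidHom).map (MonoidHom.snd H K)
      = (E.map (MonoidHom.snd H K)).map (MulAut.conj x.2).toMonoidHom := by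
  rw [map_map, map_map]
  rfl

end Projections

abbrev MaxCyclicConjClasses (G : Type*) [Group G] :=
  Quot (fun C D : {C : Subgroup G // IsMaximalCyclic C} =>
    ∃ g : G, D.1 = C.1.map (MulAut.conj g).toMonoidHom)

namespace MaxCyclicConjClasses

variable {G : Type*} [Group G]

instance [Finite G] : Finite (MaxCyclicConjClasses G) :=
  Finite.of_surjective _ Quot.mk_surjective

open Classical in
noncomputable def classOf (C : Subgroup G) : Option (MaxCyclicConjClasses G) :=
  if h : IsMaximalCyclic C then some (Quot.mk _ ⟨C, h⟩) else none

theorem classOf_map_conj (x : G) (C : Subgroup G) :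
    classOf (C.map (MulAut.conj x).toMonoidHom) = classOf C := by
  by_cases h : IsMaximalCyclic C
  · rw [classOf, dif_pos (h.map (MulAut.conj x)), classOf, dif_pos h]
    exact congrArg some (Quot.sound ⟨x, rfl⟩).symm
  · rw [classOf, dif_neg (mt (isMaximalCyclic_map_iff _ _).mp h), classOf, dif_neg h]

theorem classOf_bot [Nontrivial G] : classOf (⊥ : Subgroup G) = none :=
  dif_neg not_isMaximalCyclic_bot

noncomputable def gen (q : MaxCyclicConjClasses G) : G :=
  (q.out.1.isCyclic_iff_exists_zpowers_eq_top.mp q.out.2.1).choose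

theorem zpowers_gen (q : MaxCyclicConjClasses G) : zpowers (gen q) = q.out.1 :=
  (q.out.1.isCyclic_iff_exists_zpowers_eq_top.mp q.out.2.1).choose_spec

theorem isMaximalCyclic_zpowers_gen (q : MaxCyclicConjClasses G) :
    IsMaximalCyclic (zpowers (gen q)) :=
  zpowers_gen q ▸ q.out.2

theorem classOf_zpowers_gen (q : MaxCyclicConjClasses G) :
    classOf (zpowers (gen q)) = some q := by
  rw [classOf, dif_pos (isMaximalCyclic_zpowers_gen q)]
  conv_rhs => rw [← Quot.out_eq q]
  congr 2
  exact Subtype.ext (zpowers_gen q)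

theorem classOf_zpowers_elim_gen [Nontrivial G] (u : Option (MaxCyclicConjClasses G)) :
    classOf (zpowers (u.elim 1 gen)) = u := by
  cases u with
  | none => rw [Option.elim_none, zpowers_one_eq_bot, classOf_bot]
  | some q => exact classOf_zpowers_gen q

variable {H K : Type*} [Group H] [Group K]

noncomputable def projections : MaxCyclicConjClasses (H × K) →
    Option (MaxCyclicConjClasses H) × Option (MaxCyclicConjClasses K) :=
  Quot.lift
    (fun E => (classOf (E.1.map (MonoidHom.fst H K)), classOf (E.1.map (MonoidHom.snd H K))))
    (by
      rintro E E' ⟨x, hx⟩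
      rw [hx, map_fst_map_conj, map_snd_map_conj, classOf_map_conj, classOf_map_conj])

end MaxCyclicConjClasses

open MaxCyclicConjClasses

theorem isMaximalCyclic_zpowers_elim_gen {H K : Type*} [Group H] [Group K] [Nontrivial H]
    [Nontrivial K] {p : ℕ} [Fact p.Prime] (hH : IsPGroup p H) (hK : IsPGroup p K)
    (u : Option (MaxCyclicConjClasses H) × Option (MaxCyclicConjClasses K))
    (hu : u ≠ (none, none)) :
    IsMaximalCyclic (zpowers (u.1.elim 1 gen, u.2.elim 1 gen)) := by
  rcases u with ⟨_ | q, _ | r⟩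
  · exact absurd rfl hu
  · exact isMaximalCyclic_zpowers_prodMk_right hH hK (isMaximalCyclic_zpowers_gen r) _
  · exact isMaximalCyclic_zpowers_prodMk_left hH hK (isMaximalCyclic_zpowers_gen q) _
  · exact isMaximalCyclic_zpowers_prodMk_left hH hK (isMaximalCyclic_zpowers_gen q) _

theorem card_ne_none_none_le_eta_prod {H K : Type*} [Group H] [Group K] [Finite H] [Finite K]
    [Nontrivial H] [Nontrivial K] {p : ℕ} [Fact p.Prime] (hH : IsPGroup p H)
    (hK : IsPGroup p K) :
    Nat.card {u : Option (MaxCyclicConjClasses H) × Option (MaxCyclicConjClasses K) //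
      u ≠ (none, none)} ≤ eta (H × K) := by
  let s : {u : Option (MaxCyclicConjClasses H) × Option (MaxCyclicConjClasses K) //
      u ≠ (none, none)} → MaxCyclicConjClasses (H × K) := fun u =>
    Quot.mk _ ⟨_, isMaximalCyclic_zpowers_elim_gen hH hK u.1 u.2⟩
  have hs : ∀ u, projections (s u) = u.1 := fun u => by
    simp only [s, projections, MonoidHom.map_zpowers, MonoidHom.coe_fst, MonoidHom.coe_snd,
      classOf_zpowers_elim_gen]
  exact Nat.card_le_card_of_injective s fun u v huv => Subtype.ext (by rw [← hs, huv, hs])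

theorem Nat.card_subtype_ne_none_none {α β : Type*} [Finite α] [Finite β] :
    Nat.card {u : Option α × Option β // u ≠ (none, none)} =
      Nat.card α * Nat.card β + Nat.card α + Nat.card β := by
  have := Fintype.ofFinite α
  have := Fintype.ofFinite β
  classical
  rw [Nat.card_eq_fintype_card, Fintype.card_subtype_compl, Fintype.card_subtype_eq]
  simp only [Fintype.card_prod, Fintype.card_option, Nat.card_eq_fintype_card]
  rw [show (Fintype.card α + 1) * (Fintype.card β + 1) =
    Fintype.card α * Fintype.card β + Fintype.card α + Fintype.card β + 1 by ring,
    Nat.add_sub_cancel]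

theorem stmt_6 {H K : Type*} [Group H] [Group K] [Finite H] [Finite K]
    {p : ℕ} (hp : p.Prime) (hH : IsPGroup p H) (hK : IsPGroup p K)
    (hHnt : Nontrivial H) (hKnt : Nontrivial K) :
    eta H * eta K + eta H + eta K ≤ eta (H × K) := by
  have : Fact p.Prime := ⟨hp⟩
  calc eta H * eta K + eta H + eta K
      = Nat.card {u : Option (MaxCyclicConjClasses H) × Option (MaxCyclicConjClasses K) //
          u ≠ (none, none)} := Nat.card_subtype_ne_none_none.symm
    _ ≤ eta (H × K) := card_ne_none_none_le_eta_prod hH hK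
end

section
/- If N is a central subgroup of a finite group G, then η(G) ≥ η(N). -/
/-!
Extend a maximal cyclic subgroup `C` of `N` to a maximal cyclic subgroup `D` of `G`. As `D ⊓ N`
is a cyclic subgroup of `N` containing `C`, it equals `C`; as `N` is central, `D ⊓ N` only depends
on the conjugacy class of `D`. Hence `C ↦ [D]` is injective, and `η(N)` is at most the number of
maximal cyclic subgroups of `N`.
-/

namespace Subgroup

variable {G : Type*} [Group G]

lemma map_conj_inf_of_le_center {N : Subgroup G} (hN : N ≤ center G) (D : Subgroup G) (g : G) :
    D.map (MulAut.conj g).toMonoidHom ⊓ N = D ⊓ N := by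
  ext x
  simp only [mem_inf, mem_map_equiv, and_congr_left_iff]
  intro hx
  rw [MulAut.conj_symm_apply, mul_assoc, ← mem_center_iff.mp (hN hx) g, inv_mul_cancel_left]

lemma isCyclic_subgroupOf {D : Subgroup G} [IsCyclic D] (N : Subgroup G) :
    IsCyclic (D.subgroupOf N) :=
  isCyclic_of_injective ((N.subtype.comp (D.subgroupOf N).subtype).codRestrict D fun x => x.2)
    fun _ _ h => by ext; exact congrArg (fun y : D => (y : G)) h

instance isCyclic_map_s9 {G' : Type*} [Group G'] (H : Subgroup G) [IsCyclic H] (f : G →* G') :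
    IsCyclic (H.map f) :=
  isCyclic_of_surjective (f.subgroupMap H) (f.subgroupMap_surjective H)

lemma exists_isMaximalCyclic_le [Finite G] (C : Subgroup G) [IsCyclic C] :
    ∃ D : Subgroup G, IsMaximalCyclic D ∧ C ≤ D := by
  obtain ⟨D, ⟨hD, hCD⟩, hmax⟩ :=
    Set.Finite.exists_maximalFor id {D : Subgroup G | IsCyclic D ∧ C ≤ D} (Set.toFinite _)
      ⟨C, ‹_›, le_rfl⟩
  exact ⟨D, ⟨hD, fun E hE hDE => le_antisymm hDE (hmax ⟨hE, hCD.trans hDE⟩ hDE)⟩, hCD⟩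

lemma map_subtype_eq_inf_of_isMaximalCyclic {N : Subgroup G} {C : Subgroup N}
    (hC : IsMaximalCyclic C) {D : Subgroup G} [IsCyclic D] (hCD : C.map N.subtype ≤ D) :
    C.map N.subtype = D ⊓ N := by
  have hle : C ≤ D.subgroupOf N := fun x hx => hCD (mem_map_of_mem _ hx)
  rw [hC.2 _ (isCyclic_subgroupOf N) hle, subgroupOf_map_subtype]

end Subgroup

section Counting

variable {G : Type*} [Group G] [Finite G]

lemma eta_le_card_isMaximalCyclic : eta G ≤ Nat.card {C : Subgroup G // IsMaximalCyclic C} :=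
  Nat.card_le_card_of_surjective _ Quot.mk_surjective

lemma card_isMaximalCyclic_le_eta {N : Subgroup G} (hN : N ≤ Subgroup.center G) :
    Nat.card {C : Subgroup N // IsMaximalCyclic C} ≤ eta G := by
  have hext (C : {C : Subgroup N // IsMaximalCyclic C}) :
      ∃ D : {D : Subgroup G // IsMaximalCyclic D}, C.1.map N.subtype ≤ D.1 := by
    have := C.2.1
    obtain ⟨D, hD, hCD⟩ := (C.1.map N.subtype).exists_isMaximalCyclic_le
    exact ⟨⟨D, hD⟩, hCD⟩
  choose extend hext using hext
  have inf_extend (C) : (extend C).1 ⊓ N = C.1.map N.subtype := by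
    have := (extend C).2.1
    exact (Subgroup.map_subtype_eq_inf_of_isMaximalCyclic C.2 (hext C)).symm
  refine Nat.card_le_card_of_injective (fun C => Quot.mk _ (extend C)) fun C₁ C₂ h => ?_
  have htrace : (extend C₁).1 ⊓ N = (extend C₂).1 ⊓ N :=
    congrArg (Quot.lift (fun D => D.1 ⊓ N) (by
      rintro _ _ ⟨g, hg⟩
      rw [hg, Subgroup.map_conj_inf_of_le_center hN])) h
  rw [inf_extend, inf_extend] at htrace
  exact Subtype.ext (Subgroup.map_injective N.subtype_injective htrace)

end Counting

theorem stmt_9 {G : Type*} [Group G] [Finite G] (N : Subgroup G)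
    (hc : N ≤ Subgroup.center G) : eta N ≤ eta G :=
  eta_le_card_isMaximalCyclic.trans (card_isMaximalCyclic_le_eta hc)
end

section
/- If N is a normal subgroup of a finite group G of index k, then η(G) ≥ η(N)/k. -/
/-!
The conjugation action of `G` permutes the maximal cyclic subgroups of `N`, and `η(N)` counts
the orbits of `N` under it. Each `G`-orbit splits into at most `|G : N|` orbits of `N`. Moreover,
distinct `G`-orbits of maximal cyclic subgroups of `N` give non-conjugate maximal cyclic subgroups
of `G`: a maximal cyclic subgroup `C` of `N` lies in some maximal cyclic `M` of `G`, and `M ∩ N`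
is cyclic and contains `C`, so `C = M ∩ N` is recovered from `M`. Hence `η(N) ≤ |G : N| η(G)`.
-/

open MulAction Pointwise ConjAct

/-- The map `(gH, O) ↦ H • (g⁻¹ • O.out)` from `G ⧸ H × (X / G)` to `X / H` is surjective. -/
theorem MulAction.card_orbitRel_quotient_subgroup_le {G X : Type*} [Group G] [MulAction G X]
    (H : Subgroup G) [H.FiniteIndex] [Finite (orbitRel.Quotient G X)] :
    Nat.card (orbitRel.Quotient H X) ≤ H.index * Nat.card (orbitRel.Quotient G X) := by
  let f : (G ⧸ H) × orbitRel.Quotient G X → orbitRel.Quotient H X := fun p =>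
    p.1.liftOn' (fun g => ⟦g⁻¹ • p.2.out⟧) fun g₁ g₂ hg =>
      Quotient.sound ⟨⟨g₁⁻¹ * g₂, QuotientGroup.leftRel_apply.mp hg⟩, by
        simp [Subgroup.smul_def, smul_smul]⟩
  have hf : Function.Surjective f := by
    refine Quotient.ind fun x => ?_
    obtain ⟨g, hg⟩ : ∃ g : G, g • x = (⟦x⟧ : orbitRel.Quotient G X).out :=
      Quotient.mk_out (s := orbitRel G X) x
    exact ⟨((g : G ⧸ H), ⟦x⟧), by simp [f, ← hg]⟩
  calc Nat.card (orbitRel.Quotient H X)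
      ≤ Nat.card ((G ⧸ H) × orbitRel.Quotient G X) := Nat.card_le_card_of_surjective f hf
    _ = H.index * Nat.card (orbitRel.Quotient G X) := Nat.card_prod _ _

theorem IsMaximalCyclic.smul {α K : Type*} [Group α] [Group K] [MulDistribMulAction α K]
    {C : Subgroup K} (hC : IsMaximalCyclic C) (a : α) : IsMaximalCyclic (a • C) := by
  have := hC.1
  refine ⟨isCyclic_of_surjective _ (Subgroup.equivSMul a C).surjective, fun D hD hle => ?_⟩
  have hle' : C ≤ a⁻¹ • D := by
    rwa [← Subgroup.pointwise_smul_le_pointwise_smul_iff (a := a), smul_inv_smul]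
  have hcyc : IsCyclic ↥(a⁻¹ • D) :=
    isCyclic_of_surjective _ (Subgroup.equivSMul a⁻¹ D).surjective
  rw [hC.2 _ hcyc hle', smul_inv_smul]

def maximalCyclicSubgroups (α K : Type*) [Group α] [Group K] [MulDistribMulAction α K] :
    SubMulAction α (Subgroup K) where
  carrier := {C | IsMaximalCyclic C}
  smul_mem' a _ hC := hC.smul a

/- In the next two proofs, `toConjAct g • C` is definitionally `C.map (MulAut.conj g)`. -/

theorem eta_eq_card_orbitRel_quotient (G : Type*) [Group G] :
    eta G = Nat.card (orbitRel.Quotient (ConjAct G) (maximalCyclicSubgroups (ConjAct G) G)) := by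
  refine Nat.card_congr (Quot.congrRight fun (C D : maximalCyclicSubgroups (ConjAct G) G) => ?_)
  rw [(orbitRel (ConjAct G) _).comm', orbitRel_apply, mem_orbit_iff]
  constructor
  · rintro ⟨g, hg⟩
    exact ⟨toConjAct g, Subtype.ext hg.symm⟩
  · rintro ⟨g, rfl⟩
    exact ⟨ofConjAct g, rfl⟩

section Conjugation

variable {G : Type*} [Group G]

theorem eta_eq_card_orbitRel_quotient_of_normal (N : Subgroup G) [N.Normal] :
    eta N = Nat.card (orbitRel.Quotient (N.comap (ofConjAct : ConjAct G ≃* G).toMonoidHom)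
      (maximalCyclicSubgroups (ConjAct G) N)) := by
  refine Nat.card_congr (Quot.congrRight fun (C D : maximalCyclicSubgroups (ConjAct G) N) => ?_)
  rw [(orbitRel _ _).comm', orbitRel_apply, mem_orbit_iff]
  constructor
  · rintro ⟨n, hn⟩
    exact ⟨⟨toConjAct (n : G), n.2⟩, Subtype.ext hn.symm⟩
  · rintro ⟨⟨g, hg⟩, rfl⟩
    exact ⟨⟨ofConjAct g, hg⟩, rfl⟩

instance Subgroup.isCyclic_subgroupOf_s10 (N M : Subgroup G) [IsCyclic M] :
    IsCyclic (M.subgroupOf N) :=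
  isCyclic_of_injective ((N.subtype.comp (M.subgroupOf N).subtype).codRestrict M fun x => x.2)
    fun _ _ h => Subtype.ext (Subtype.ext (congrArg (fun z : M => (z : G)) h))

theorem IsMaximalCyclic.eq_subgroupOf {N : Subgroup G} {C : Subgroup N} (hC : IsMaximalCyclic C)
    {M : Subgroup G} [IsCyclic M] (h : C.map N.subtype ≤ M) : C = M.subgroupOf N :=
  hC.2 _ inferInstance (Subgroup.map_le_iff_le_comap.mp h)

theorem exists_isMaximalCyclic_le [Finite G] (C : Subgroup G) [IsCyclic C] :
    ∃ M, C ≤ M ∧ IsMaximalCyclic M := by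
  obtain ⟨M, hCM, hM⟩ :=
    Finite.exists_le_maximal (p := fun D : Subgroup G => IsCyclic D) ‹IsCyclic C›
  exact ⟨M, hCM, hM.1, fun D hD hMD => le_antisymm hMD (hM.2 hD hMD)⟩

theorem map_subtype_smul {N : Subgroup G} [N.Normal] (g : ConjAct G) (C : Subgroup N) :
    (g • C).map N.subtype = g • C.map N.subtype :=
  SetLike.coe_injective (Set.image_smul_comm _ _ _ fun _ => rfl)

theorem card_orbitRel_quotient_maximalCyclicSubgroups_le [Finite G] (N : Subgroup G) [N.Normal] :
    Nat.card (orbitRel.Quotient (ConjAct G) (maximalCyclicSubgroups (ConjAct G) N)) ≤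
      Nat.card (orbitRel.Quotient (ConjAct G) (maximalCyclicSubgroups (ConjAct G) G)) := by
  have hext (C : maximalCyclicSubgroups (ConjAct G) N) :
      ∃ M : maximalCyclicSubgroups (ConjAct G) G, (C : Subgroup N).map N.subtype ≤ M := by
    have := C.2.1
    have := isCyclic_of_surjective _ (N.subtype.subgroupMap_surjective C)
    obtain ⟨M, hle, hM⟩ := exists_isMaximalCyclic_le ((C : Subgroup N).map N.subtype)
    exact ⟨⟨M, hM⟩, hle⟩
  choose M hM using hext
  refine Nat.card_le_card_of_injective (fun q => ⟦M q.out⟧) fun q₁ q₂ h => ?_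
  obtain ⟨g, hg⟩ := Quotient.exact h
  have := (M q₁.out).2.1
  have hconj : g • q₂.out = q₁.out := by
    refine Subtype.ext ((q₂.out.2.smul g).eq_subgroupOf ?_ |>.trans
      (q₁.out.2.eq_subgroupOf (hM _)).symm)
    rw [map_subtype_smul, ← hg]
    exact Subgroup.pointwise_smul_le_pointwise_smul_iff.mpr (hM _)
  rw [← q₁.out_eq, ← q₂.out_eq, ← hconj]
  exact Quotient.sound ⟨g, rfl⟩

end Conjugation

theorem stmt_10 {G : Type*} [Group G] [Finite G] (N : Subgroup G) [N.Normal]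
    (k : ℕ) (hk : N.index = k) :
    (eta N : ℚ) / k ≤ eta G := by
  subst hk
  have : Finite (ConjAct G) := Finite.of_equiv G toConjAct.toEquiv
  have key : eta N ≤ N.index * eta G := calc
    eta N = Nat.card (orbitRel.Quotient (N.comap (ofConjAct : ConjAct G ≃* G).toMonoidHom)
        (maximalCyclicSubgroups (ConjAct G) N)) := eta_eq_card_orbitRel_quotient_of_normal N
    _ ≤ (N.comap (ofConjAct : ConjAct G ≃* G).toMonoidHom).index *
        Nat.card (orbitRel.Quotient (ConjAct G) (maximalCyclicSubgroups (ConjAct G) N)) :=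
      card_orbitRel_quotient_subgroup_le _
    _ ≤ N.index * eta G := by
      rw [Subgroup.index_comap_of_surjective _ ofConjAct.surjective, eta_eq_card_orbitRel_quotient]
      exact Nat.mul_le_mul_left _ (card_orbitRel_quotient_maximalCyclicSubgroups_le N)
  rw [div_le_iff₀ (by exact_mod_cast Nat.pos_of_ne_zero N.index_ne_zero_of_finite), mul_comm]
  exact_mod_cast key
end

section
/- For a finite group G, the set G⁻ = {g ∈ G : ⟨g⟩ is not maximal cyclic} equals {gᑫ : g ∈ G, q a prime dividing the order of g}. -/
/-!
If `⟨x⟩ < ⟨h⟩` with `h` of order `n`, then `m = orderOf x` is a proper divisor of `n`; pick a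
prime `q ∣ n / m`. Since units of `ZMod m` lift to units of `ZMod n`, every generator of the
subgroup of order `m` of a cyclic group of order `n` is the `(n / m)`-th power of a generator
`z`, and then `x = (z ^ (n / (m * q))) ^ q` with a base of order `m * q`. Conversely
`⟨g ^ q⟩ < ⟨g⟩` whenever the prime `q` divides `orderOf g`.
-/

open Subgroup

theorem Nat.exists_coprime_modEq_of_dvd {m n t : ℕ} (hmn : m ∣ n) (hn : n ≠ 0)
    (ht : t.Coprime m) : ∃ t', t'.Coprime n ∧ t' ≡ t [MOD m] := by
  have : NeZero n := ⟨hn⟩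
  obtain ⟨u, hu⟩ := ZMod.unitsMap_surjective hmn (ZMod.unitOfCoprime t ht)
  refine ⟨(u : ZMod n).val, ZMod.val_coe_unit_coprime u, ?_⟩
  rw [← ZMod.natCast_eq_natCast_iff, ZMod.natCast_val, ← ZMod.unitsMap_val hmn, hu]
  rfl

section

variable {G : Type*} [Group G]

theorem not_isMaximalCyclic_zpowers_iff {x : G} :
    ¬ IsMaximalCyclic (zpowers x) ↔ ∃ h : G, zpowers x < zpowers h := by
  simp only [IsMaximalCyclic, isCyclic_zpowers, true_and, not_forall]
  constructor
  · rintro ⟨D, hD, hle, hne⟩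
    obtain ⟨h, rfl⟩ := D.isCyclic_iff_exists_zpowers_eq_top.mp hD
    exact ⟨h, lt_of_le_of_ne hle hne⟩
  · rintro ⟨h, hlt⟩
    exact ⟨zpowers h, isCyclic_zpowers h, hlt.le, hlt.ne⟩

theorem zpowers_pow_lt_zpowers_of_prime_dvd {g : G} {q : ℕ} (hq : q.Prime)
    (hqg : q ∣ orderOf g) : zpowers (g ^ q) < zpowers g := by
  refine lt_of_le_of_ne (zpowers_le.mpr (pow_mem (mem_zpowers g) q)) fun heq => ?_
  have hgcd := mem_zpowers_pow_iff.mp (heq ▸ mem_zpowers g)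
  rw [Nat.gcd_eq_left hqg] at hgcd
  exact hq.one_lt.ne' hgcd

theorem zpowers_eq_of_mem_of_orderOf_eq {x y : G} (hy : IsOfFinOrder y)
    (hx : x ∈ zpowers y) (hxy : orderOf x = orderOf y) : zpowers x = zpowers y := by
  have : Finite (zpowers y) :=
    Nat.finite_of_card_ne_zero (by rw [Nat.card_zpowers]; exact hy.orderOf_pos.ne')
  exact eq_of_le_of_card_ge (zpowers_le.mpr hx) (by rw [Nat.card_zpowers, Nat.card_zpowers, hxy])

theorem exists_orderOf_eq_and_pow_eq_of_mem_zpowers {x y : G} {k : ℕ} (hy : IsOfFinOrder y)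
    (hx : x ∈ zpowers y) (hxy : orderOf y = k * orderOf x) :
    ∃ z : G, orderOf z = orderOf y ∧ z ^ k = x := by
  obtain ⟨a, rfl⟩ := hy.mem_powers_iff_mem_zpowers.mpr hx
  generalize hm_def : orderOf (y ^ a) = m at hxy
  have hn : orderOf y ≠ 0 := hy.orderOf_pos.ne'
  have hm : m ≠ 0 := right_ne_zero_of_mul (hxy ▸ hn)
  have hk : k ≠ 0 := left_ne_zero_of_mul (hxy ▸ hn)
  have hgcd : (orderOf y).gcd a = k := by
    apply Nat.eq_of_mul_eq_mul_right (Nat.pos_of_ne_zero hm)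
    rw [← hxy, ← hm_def, hy.orderOf_pow, Nat.mul_div_cancel' (Nat.gcd_dvd_left _ _)]
  obtain ⟨t, rfl⟩ : k ∣ a := hgcd ▸ Nat.gcd_dvd_right _ _
  have ht : t.Coprime m := by
    rw [hxy, Nat.gcd_mul_left, Nat.mul_eq_left hk] at hgcd
    exact Nat.coprime_comm.mp hgcd
  obtain ⟨t', ht', htt'⟩ := Nat.exists_coprime_modEq_of_dvd (Dvd.intro_left k hxy.symm) hn ht
  refine ⟨y ^ t', (Nat.coprime_comm.mp ht').orderOf_pow, ?_⟩
  rw [← pow_mul, pow_eq_pow_iff_modEq, hxy, mul_comm t' k]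
  exact htt'.mul_left' k

theorem exists_prime_pow_eq_of_zpowers_lt {x h : G} (hh : IsOfFinOrder h)
    (hlt : zpowers x < zpowers h) :
    ∃ (g : G) (q : ℕ), q.Prime ∧ q ∣ orderOf g ∧ x = g ^ q := by
  have hx : x ∈ zpowers h := zpowers_le.mp hlt.le
  obtain ⟨s, hs⟩ := orderOf_dvd_of_mem_zpowers hx
  have hs1 : s ≠ 1 := by
    rintro rfl
    exact hlt.ne (zpowers_eq_of_mem_of_orderOf_eq hh hx (by rw [hs, mul_one]))
  obtain ⟨q, hq, j, rfl⟩ := Nat.exists_prime_and_dvd hs1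
  obtain ⟨z, hz, hzx⟩ :=
    exists_orderOf_eq_and_pow_eq_of_mem_zpowers (k := q * j) hh hx (by rw [hs]; ring)
  have hj : j ≠ 0 := by
    rintro rfl
    exact hh.orderOf_pos.ne' (by rw [hs, mul_zero, mul_zero])
  refine ⟨z ^ j, q, hq, ?_, by rw [← hzx, ← pow_mul, mul_comm j q]⟩
  rw [orderOf_pow_of_dvd hj ⟨orderOf x * q, by rw [hz, hs]; ring⟩]
  exact Nat.dvd_div_of_mul_dvd ⟨orderOf x, by rw [hz, hs]; ring⟩

end

theorem stmt_11 {G : Type*} [Group G] [Finite G] :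
    Gminus G = {x : G | ∃ (g : G) (q : ℕ), q.Prime ∧ q ∣ orderOf g ∧ x = g ^ q} := by
  ext x
  simp only [Gminus, Set.mem_ofPred_eq, not_isMaximalCyclic_zpowers_iff]
  constructor
  · rintro ⟨h, hlt⟩
    exact exists_prime_pow_eq_of_zpowers_lt (isOfFinOrder_of_finite h) hlt
  · rintro ⟨g, q, hq, hqg, rfl⟩
    exact ⟨g, zpowers_pow_lt_zpowers_of_prime_dvd hq hqg⟩
end

section
/- If G is a finite p-group and N ◁ G with G/N of exponent p, then G⁻ ⊆ N. -/
/-! If `⟨g⟩ ≤ ⟨h⟩` in a `p`-group then `g = h ^ k`; either `p ∣ k`, so that `g` is a power of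
`h ^ p`, or `k` is prime to the `p`-power order of `h` and `g` generates `⟨h⟩`. Since every
`p`-th power lies in `N`, an element outside `N` can only be contained in a cyclic subgroup
that it generates. -/

open Subgroup

theorem IsPGroup.mem_zpowers_or_mem_zpowers_pow {p : ℕ} {G : Type*} [Group G] (hp : p.Prime)
    (hG : IsPGroup p G) {g h : G} (hg : g ∈ zpowers h) :
    h ∈ zpowers g ∨ g ∈ zpowers (h ^ p) := by
  obtain ⟨k, rfl⟩ := mem_zpowers_iff.mp hg
  by_cases hpk : (p : ℤ) ∣ k
  · obtain ⟨m, rfl⟩ := hpk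
    exact Or.inr (by rw [zpow_mul, zpow_natCast]; exact zpow_mem (mem_zpowers _) m)
  · left
    obtain ⟨n, hn⟩ := hG h
    have hkp : k.natAbs.Coprime p :=
      Nat.coprime_comm.mp (hp.coprime_iff_not_dvd.mpr (Int.ofNat_dvd_left.not.mp hpk))
    exact mem_zpowers_zpow_iff.mpr
      ((hkp.pow_right n).coprime_dvd_right (orderOf_dvd_of_pow_eq_one hn))

theorem pow_mem_of_forall_pow_eq_one {G : Type*} [Group G] {N : Subgroup G} [N.Normal] {n : ℕ}
    (hexp : ∀ x : G ⧸ N, x ^ n = 1) (g : G) : g ^ n ∈ N :=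
  (QuotientGroup.eq_one_iff _).mp (hexp g)

theorem stmt_15_general {G : Type*} [Group G] {p : ℕ} (hp : p.Prime)
    (hG : IsPGroup p G) (N : Subgroup G) [N.Normal]
    (hexp : ∀ x : G ⧸ N, x ^ p = 1) :
    Gminus G ⊆ (N : Set G) := by
  intro g hg
  by_contra hgN
  refine hg ⟨inferInstance, fun D hD hgD => ?_⟩
  obtain ⟨h, rfl⟩ := (D.isCyclic_iff_exists_zpowers_eq_top).mp hD
  rcases hG.mem_zpowers_or_mem_zpowers_pow hp (zpowers_le.mp hgD) with hh | hgp
  · exact le_antisymm hgD (zpowers_le.mpr hh)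
  · exact absurd (zpowers_le.mpr (pow_mem_of_forall_pow_eq_one hexp h) hgp) hgN

theorem stmt_15 {G : Type*} [Group G] [Finite G] {p : ℕ} (hp : p.Prime)
    (hG : IsPGroup p G) (N : Subgroup G) [N.Normal]
    (hexp : ∀ x : G ⧸ N, x ^ p = 1) :
    Gminus G ⊆ (N : Set G) :=
  stmt_15_general hp hG N hexp
end
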